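/- (Deterministic prediction oracle inequality.) Let X, ε be n×p real matrices (n ≥ 1) and G₀ a p×p real matrix with X = X G₀ + ε. Let S ⊆ {1,…,p}² contain the support of G₀ with |S| ≤ s² for some integer s ≥ 1. Let λ > 0, let 𝒢 be a set of p×p matrices containing G₀, and let Ĝ ∈ 𝒢 minimize G ↦ (1/n)‖X(I − G)‖_F² + λ‖G‖₁ over 𝒢; set Δ = Ĝ − G₀. Assume: (i) the cross-term bound (2/n)·|trace(εᵀ X Δ)| ≤ (λ/2)‖Δ‖₁; and (ii) the restricted eigenvalue condition: there is κ > 0 such that for every p×p matrix M with ‖M_{S^C}‖₁ ≤ 3‖M_S‖₁ one has (1/√n)‖XM‖_F ≥ κ‖M_S‖_F. Then (1/n)‖X(Ĝ − G₀)‖_F² ≤ (9/4)·λ² s² / κ². -/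
import Mathlib


open Matrix BigOperators

/-- Entrywise Frobenius norm of a real matrix. -/
noncomputable def frob {n p : ℕ} (A : Matrix (Fin n) (Fin p) ℝ) : ℝ :=
  Real.sqrt (∑ i, ∑ j, (A i j) ^ 2)

/-- Entrywise ℓ1 norm of a real matrix. -/
noncomputable def l1 {n p : ℕ} (A : Matrix (Fin n) (Fin p) ℝ) : ℝ :=
  ∑ i, ∑ j, |A i j|

/-- `P` is a permutation matrix. -/
def IsPermMatrix {p : ℕ} (P : Matrix (Fin p) (Fin p) ℝ) : Prop :=
  ∃ σ : Equiv.Perm (Fin p), ∀ i j, P i j = if i = σ j then 1 else 0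

/-- `T` is strictly lower triangular. -/
def StrictLowerTri {p : ℕ} (T : Matrix (Fin p) (Fin p) ℝ) : Prop :=
  ∀ i j : Fin p, i ≤ j → T i j = 0

/-- The directed graph with an edge `i → j` whenever `G i j ≠ 0` is acyclic
(no directed cycle, self-loops included). -/
def AcyclicMatrix {p : ℕ} (G : Matrix (Fin p) (Fin p) ℝ) : Prop :=
  ∀ i : Fin p, ¬ Relation.TransGen (fun a b : Fin p => G a b ≠ 0) i i

/-- The matrix equal to `M` on the entries indexed by `S` and zero elsewhere. -/
def restrictTo {p : ℕ} (S : Finset (Fin p × Fin p)) (M : Matrix (Fin p) (Fin p) ℝ) :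
    Matrix (Fin p) (Fin p) ℝ :=
  fun i j => if (i, j) ∈ S then M i j else 0

lemma frob_nonneg' {n p : ℕ} (A : Matrix (Fin n) (Fin p) ℝ) : 0 ≤ frob A :=
  Real.sqrt_nonneg _

lemma frob_sq' {n p : ℕ} (A : Matrix (Fin n) (Fin p) ℝ) :
    frob A ^ 2 = ∑ i, ∑ j, (A i j) ^ 2 := by
  rw [frob, Real.sq_sqrt]
  positivity

lemma l1_nonneg' {n p : ℕ} (A : Matrix (Fin n) (Fin p) ℝ) : 0 ≤ l1 A := by
  unfold l1
  positivity

lemma sum_sub_sq' {n p : ℕ} (A B : Matrix (Fin n) (Fin p) ℝ) :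
    ∑ i, ∑ j, (A i j - B i j) ^ 2 =
      (∑ i, ∑ j, (A i j) ^ 2) - 2 * (∑ i, ∑ j, A i j * B i j) + ∑ i, ∑ j, (B i j) ^ 2 := by
  have h : ∀ i : Fin n, ∑ j, (A i j - B i j) ^ 2
      = (∑ j, (A i j) ^ 2) - 2 * (∑ j, A i j * B i j) + ∑ j, (B i j) ^ 2 := by
    intro i
    rw [Finset.mul_sum, ← Finset.sum_sub_distrib, ← Finset.sum_add_distrib]
    exact Finset.sum_congr rfl fun j _ => by ring
  simp only [h]
  rw [Finset.mul_sum, ← Finset.sum_sub_distrib, ← Finset.sum_add_distrib]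

lemma quad_bound' (lam sr κ t fr : ℝ) (hlam : 0 < lam) (hκ : 0 < κ) (hsr : 0 ≤ sr)
    (htnn : 0 ≤ t) (hfr : 0 ≤ fr)
    (hA : t ^ 2 ≤ 3 * lam / 2 * (sr * fr)) (hre : κ * fr ≤ t) :
    t ^ 2 * κ ^ 2 ≤ 9 / 4 * lam ^ 2 * sr ^ 2 := by
  have e1 := mul_le_mul_of_nonneg_left hA hκ.le
  have e2 := mul_le_mul_of_nonneg_left hre
    (mul_nonneg (by linarith : (0:ℝ) ≤ 3 * lam / 2) hsr)
  have h1' : κ * t ^ 2 ≤ 3 * lam / 2 * sr * t := by nlinarith [e1, e2]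
  have h2' := mul_le_mul_of_nonneg_left h1' hκ.le
  nlinarith [h2', sq_nonneg (κ * t - 3 * lam / 2 * sr), htnn, hκ.le, hlam.le]

lemma sq_le_of_sq_le_sq' {a b : ℝ} (ha : 0 ≤ a) (hb : 0 ≤ b) (h : a ^ 2 ≤ b ^ 2) : a ≤ b :=
  calc a = Real.sqrt (a ^ 2) := (Real.sqrt_sq ha).symm
    _ ≤ Real.sqrt (b ^ 2) := Real.sqrt_le_sqrt h
    _ = b := Real.sqrt_sq hb

theorem stmt_15 {n p : ℕ} (hn : 1 ≤ n) (X eps : Matrix (Fin n) (Fin p) ℝ)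
    (G₀ : Matrix (Fin p) (Fin p) ℝ) (hmodel : X = X * G₀ + eps)
    (S : Finset (Fin p × Fin p)) (hsupp : ∀ i j : Fin p, (i, j) ∉ S → G₀ i j = 0)
    (s : ℕ) (hs : 1 ≤ s) (hcard : S.card ≤ s ^ 2)
    (lam : ℝ) (hlam : 0 < lam)
    (𝒢 : Set (Matrix (Fin p) (Fin p) ℝ)) (hG₀ : G₀ ∈ 𝒢)
    (Ghat : Matrix (Fin p) (Fin p) ℝ) (hGhat : Ghat ∈ 𝒢)
    (hmin : ∀ G ∈ 𝒢,
      (1 / (n : ℝ)) * (frob (X * (1 - Ghat))) ^ 2 + lam * l1 Ghat ≤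
        (1 / (n : ℝ)) * (frob (X * (1 - G))) ^ 2 + lam * l1 G)
    (hcross : (2 / (n : ℝ)) * |Matrix.trace (epsᵀ * (X * (Ghat - G₀)))| ≤
      (lam / 2) * l1 (Ghat - G₀))
    (κ : ℝ) (hκ : 0 < κ)
    (hRE : ∀ M : Matrix (Fin p) (Fin p) ℝ,
      l1 (M - restrictTo S M) ≤ 3 * l1 (restrictTo S M) →
        κ * frob (restrictTo S M) ≤ (1 / Real.sqrt n) * frob (X * M)) :
    (1 / (n : ℝ)) * (frob (X * (Ghat - G₀))) ^ 2 ≤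
      (9 / 4) * lam ^ 2 * (s : ℝ) ^ 2 / κ ^ 2 := by

  -- setup
  have hn0 : (0:ℝ) < (n:ℝ) := by exact_mod_cast Nat.lt_of_lt_of_le Nat.zero_lt_one hn
  set Δ : Matrix (Fin p) (Fin p) ℝ := Ghat - G₀ with hΔdef
  set R : Matrix (Fin p) (Fin p) ℝ := restrictTo S Δ with hRdef
  set Δc : Matrix (Fin p) (Fin p) ℝ := Δ - restrictTo S Δ with hΔcdef
  have heps : eps = X - X * G₀ := eq_sub_of_add_eq' hmodel.symm
  have heq1 : X * (1 - G₀) = eps := by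
    rw [heps, Matrix.mul_sub, Matrix.mul_one]
  have h1 : X * (1 - Ghat) = eps - X * Δ := by
    rw [heps, hΔdef, Matrix.mul_sub, Matrix.mul_one, Matrix.mul_sub]
    abel
  set IP : ℝ := ∑ i, ∑ j, eps i j * (X * Δ) i j with hIPdef
  have h2 : frob (X * (1 - Ghat)) ^ 2
      = frob eps ^ 2 - 2 * IP + frob (X * Δ) ^ 2 := by
    rw [h1, frob_sq', frob_sq', frob_sq', hIPdef]
    simpa [Matrix.sub_apply] using sum_sub_sq' eps (X * Δ)
  have h3 : Matrix.trace (epsᵀ * (X * Δ)) = IP := by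
    rw [hIPdef]
    simp only [Matrix.trace, Matrix.diag, Matrix.mul_apply, Matrix.transpose_apply]
    exact Finset.sum_comm
  -- l1 splitting
  have h4 : ∀ M : Matrix (Fin p) (Fin p) ℝ,
      l1 M = l1 (restrictTo S M) + l1 (M - restrictTo S M) := by
    intro M
    unfold l1
    rw [← Finset.sum_add_distrib]
    refine Finset.sum_congr rfl fun i _ => ?_
    rw [← Finset.sum_add_distrib]
    refine Finset.sum_congr rfl fun j _ => ?_
    by_cases h : (i, j) ∈ S <;> simp [restrictTo, Matrix.sub_apply, h]
  have h5 : l1 G₀ + l1 Δc ≤ l1 Ghat + l1 R := by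
    unfold l1
    rw [← Finset.sum_add_distrib, ← Finset.sum_add_distrib]
    refine Finset.sum_le_sum fun i _ => ?_
    rw [← Finset.sum_add_distrib, ← Finset.sum_add_distrib]
    refine Finset.sum_le_sum fun j _ => ?_
    by_cases h : (i, j) ∈ S
    · have hG : G₀ i j = Ghat i j - Δ i j := by simp [hΔdef, Matrix.sub_apply]
      simp [hΔcdef, hRdef, restrictTo, Matrix.sub_apply, h, hG]
      exact abs_sub _ _
    · have hG : G₀ i j = 0 := hsupp i j h
      have hD : Δ i j = Ghat i j := by simp [hΔdef, Matrix.sub_apply, hG]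
      simp [hΔcdef, hRdef, restrictTo, Matrix.sub_apply, h, hG, hD]
  -- Cauchy-Schwarz : l1 R ≤ s * frob R
  have hprod : ∀ f : Fin p → Fin p → ℝ,
      ∑ q ∈ (Finset.univ : Finset (Fin p × Fin p)), f q.1 q.2 = ∑ i, ∑ j, f i j := by
    intro f
    rw [← Finset.univ_product_univ, Finset.sum_product']
  have hl1R : l1 R = ∑ q ∈ S, |R q.1 q.2| := by
    unfold l1
    rw [← hprod fun i j => |R i j|]
    refine (Finset.sum_subset (Finset.subset_univ S) ?_).symm
    intro q _ hq
    simp [hRdef, restrictTo, hq]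
  have hfrR : ∑ q ∈ S, (R q.1 q.2) ^ 2 ≤ frob R ^ 2 := by
    rw [frob_sq', ← hprod fun i j => (R i j) ^ 2]
    exact Finset.sum_le_sum_of_subset_of_nonneg (Finset.subset_univ S)
      (fun q _ _ => sq_nonneg _)
  have hcs := Finset.sum_mul_sq_le_sq_mul_sq S (fun _ => (1:ℝ)) (fun q => |R q.1 q.2|)
  simp only [one_mul, one_pow, Finset.sum_const, nsmul_eq_mul, mul_one, sq_abs] at hcs
  have hcardR : (S.card : ℝ) ≤ (s:ℝ) ^ 2 := by exact_mod_cast hcard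
  have h6sq : l1 R ^ 2 ≤ ((s:ℝ) * frob R) ^ 2 := by
    rw [hl1R, mul_pow]
    calc (∑ q ∈ S, |R q.1 q.2|) ^ 2 ≤ (S.card : ℝ) * ∑ q ∈ S, (R q.1 q.2) ^ 2 := hcs
      _ ≤ (s:ℝ) ^ 2 * frob R ^ 2 := by
          have h0 : (0:ℝ) ≤ ∑ q ∈ S, (R q.1 q.2) ^ 2 := Finset.sum_nonneg fun q _ => sq_nonneg _
          have h1' : (0:ℝ) ≤ (S.card : ℝ) := Nat.cast_nonneg _
          nlinarith [hfrR, hcardR]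
  have h6 : l1 R ≤ (s:ℝ) * frob R :=
    sq_le_of_sq_le_sq' (l1_nonneg' R)
      (mul_nonneg (Nat.cast_nonneg _) (frob_nonneg' R)) h6sq
  -- basic inequality
  have hb := hmin G₀ hG₀
  rw [h2, heq1] at hb
  have hIPle : (2 / (n:ℝ)) * IP ≤ (2 / (n:ℝ)) * |IP| :=
    mul_le_mul_of_nonneg_left (le_abs_self IP) (by positivity)
  have hcross' : (2 / (n:ℝ)) * |IP| ≤ (lam / 2) * (l1 R + l1 Δc) := by
    rw [← h4 Δ, ← h3]
    exact hcross
  have hlamh5 : lam * (l1 G₀ + l1 Δc) ≤ lam * (l1 Ghat + l1 R) :=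
    mul_le_mul_of_nonneg_left h5 hlam.le
  have hstar : (1 / (n:ℝ)) * frob (X * Δ) ^ 2 + (lam / 2) * l1 Δc
      ≤ (3 * lam / 2) * l1 R := by
    have hexp : (1 / (n:ℝ)) * (frob eps ^ 2 - 2 * IP + frob (X * Δ) ^ 2)
        = (1 / (n:ℝ)) * frob eps ^ 2 - (2 / (n:ℝ)) * IP
          + (1 / (n:ℝ)) * frob (X * Δ) ^ 2 := by ring
    rw [hexp] at hb
    linarith [hb, hIPle, hcross', hlamh5]
  -- cone condition and RE
  have hFnn : (0:ℝ) ≤ (1 / (n:ℝ)) * frob (X * Δ) ^ 2 := by positivity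
  have hcone : l1 Δc ≤ 3 * l1 R := by
    have h7 : (lam / 2) * l1 Δc ≤ (lam / 2) * (3 * l1 R) := by linarith
    exact le_of_mul_le_mul_left h7 (by linarith)
  have hre := hRE Δ hcone
  -- final algebra
  set t : ℝ := (1 / Real.sqrt n) * frob (X * Δ) with htdef
  have htnn : (0:ℝ) ≤ t :=
    mul_nonneg (by positivity) (frob_nonneg' _)
  have hsq : (Real.sqrt n) ^ 2 = (n:ℝ) := Real.sq_sqrt hn0.le
  have ht2 : (1 / (n:ℝ)) * frob (X * Δ) ^ 2 = t ^ 2 := by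
    rw [htdef, mul_pow, div_pow, one_pow, hsq]
  have hA : t ^ 2 ≤ (3 * lam / 2) * ((s:ℝ) * frob R) := by
    have hthis := mul_le_mul_of_nonneg_left h6 (by linarith : (0:ℝ) ≤ 3 * lam / 2)
    have hΔcnn : (0:ℝ) ≤ lam / 2 * l1 Δc :=
      mul_nonneg (by linarith) (l1_nonneg' Δc)
    linarith [hstar, ht2, hthis]
  rw [ht2, le_div_iff₀ (pow_pos hκ 2)]
  exact quad_bound' lam (s:ℝ) κ t (frob R) hlam hκ (Nat.cast_nonneg _) htnn (frob_nonneg' R)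
    hA hre
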